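/- arXiv:2106.12276 — 5 statements merged into one kernel-verified Lean document; each statement's English description precedes it below -/
import Mathlib

section
/- For all real k > 0, λ > 0 and x > 0, the function f_{k,λ} is differentiable at x and its derivative satisfies f'_{k,λ}(x) = (1/2) · f_{k,λ}(x) · [ −1 + (k−2)/(2x) + √(λ/x) · I'_{(k−2)/2}(√(λx)) / I_{(k−2)/2}(√(λx)) ], where I'_ν denotes the derivative of the function I_ν. -/
/-!
For `y > 0`, `I_ν(y) = (y/2)^ν g_ν((y/2)^2)` with `g_ν(t) = ∑ t^m / (m! Γ(m+ν+1))`. The ratio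
of consecutive coefficients of `g_ν` is `1/((m+1)(m+ν+1)) → 0`, so `g_ν` is an entire power
series, with positive coefficients when `ν > -1`. Hence `I_ν` is differentiable and positive on
`(0, ∞)`, and the formula is the product and chain rule for the three factors of `f_{k,λ}`, with
the last term divided and multiplied by `I_ν(√(λx)) ≠ 0`.
-/

open Real

/-- Modified Bessel function of the first kind, defined by its power series. -/
noncomputable def besselI (ν : ℝ) (x : ℝ) : ℝ :=
  ∑' m : ℕ, (x / 2) ^ (2 * (m : ℝ) + ν) / ((Nat.factorial m : ℝ) * Real.Gamma ((m : ℝ) + ν + 1))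

/-- PDF of the non-central chi-squared distribution with `k` degrees of freedom
and non-centrality `lam`. -/
noncomputable def ncchi (k lam x : ℝ) : ℝ :=
  1 / 2 * Real.exp (-(x + lam) / 2) * (x / lam) ^ ((k - 2) / 4) *
    besselI ((k - 2) / 2) (Real.sqrt (lam * x))

open Filter Topology FormalMultilinearSeries Nat

noncomputable def besselCoeff (ν : ℝ) (m : ℕ) : ℝ := ((m ! : ℝ) * Gamma (m + ν + 1))⁻¹

section Bessel

variable {ν : ℝ}

lemma besselCoeff_pos (hν : -1 < ν) (m : ℕ) : 0 < besselCoeff ν m := by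
  have := Gamma_pos_of_pos (by linarith [m.cast_nonneg (α := ℝ)] : 0 < (m : ℝ) + ν + 1)
  unfold besselCoeff
  positivity

lemma besselCoeff_succ (hν : -1 < ν) (m : ℕ) :
    besselCoeff ν (m + 1) = besselCoeff ν m / ((m + 1) * (m + ν + 1)) := by
  have hm : (m : ℝ) + ν + 1 ≠ 0 := by linarith [m.cast_nonneg (α := ℝ)]
  have hΓ : Gamma (((m + 1 : ℕ) : ℝ) + ν + 1) = (m + ν + 1) * Gamma (m + ν + 1) := by
    rw [← Gamma_add_one hm]
    push_cast
    ring_nf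
  simp only [besselCoeff, hΓ, factorial_succ]
  push_cast
  field_simp

lemma radius_ofScalars_besselCoeff (hν : -1 < ν) :
    (ofScalars ℝ (besselCoeff ν)).radius = ⊤ := by
  refine ofScalars_radius_eq_top_of_tendsto ℝ _
    (Eventually.of_forall fun m => (besselCoeff_pos hν m).ne') ?_
  have hratio : ∀ m : ℕ, ‖besselCoeff ν m.succ‖ / ‖besselCoeff ν m‖
      = ((m + 1) * (m + ν + 1))⁻¹ := fun m => by
    rw [norm_of_nonneg (besselCoeff_pos hν _).le, norm_of_nonneg (besselCoeff_pos hν _).le,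
      besselCoeff_succ hν, div_div_cancel_left' (besselCoeff_pos hν m).ne']
  simp only [hratio]
  refine tendsto_inv_atTop_zero.comp (Tendsto.atTop_mul_atTop₀ ?_ ?_)
  · exact tendsto_atTop_add_const_right _ 1 tendsto_natCast_atTop_atTop
  · exact tendsto_atTop_add_const_right _ 1
      (tendsto_atTop_add_const_right _ ν tendsto_natCast_atTop_atTop)

noncomputable def besselSeries (ν : ℝ) : ℝ → ℝ := ofScalarsSum (besselCoeff ν)

lemma summable_besselCoeff_mul_pow (hν : -1 < ν) (t : ℝ) :
    Summable fun m => besselCoeff ν m * t ^ m := by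
  simpa [ofScalars_apply_eq, mul_comm] using
    (ofScalars ℝ (besselCoeff ν)).summable (x := t) (by simp [radius_ofScalars_besselCoeff hν])

lemma besselSeries_eq_tsum (t : ℝ) : besselSeries ν t = ∑' m, besselCoeff ν m * t ^ m :=
  ofScalars_sum_eq _ t

lemma besselSeries_pos (hν : -1 < ν) {t : ℝ} (ht : 0 ≤ t) : 0 < besselSeries ν t := by
  rw [besselSeries_eq_tsum]
  refine (summable_besselCoeff_mul_pow hν t).tsum_pos
    (fun m => mul_nonneg (besselCoeff_pos hν m).le (pow_nonneg ht m)) 0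
    (by simpa using besselCoeff_pos hν 0)

lemma differentiable_besselSeries (hν : -1 < ν) : Differentiable ℝ (besselSeries ν) := by
  have h := (ofScalars ℝ (besselCoeff ν)).hasFPowerSeriesOnBall
    (by simp [radius_ofScalars_besselCoeff hν])
  exact fun t => (h.analyticAt_of_mem (by simp [radius_ofScalars_besselCoeff hν])).differentiableAt

lemma besselI_eq_rpow_mul_besselSeries {y : ℝ} (hy : 0 < y) :
    besselI ν y = (y / 2) ^ ν * besselSeries ν ((y / 2) ^ 2) := by
  rw [besselI, besselSeries_eq_tsum, ← tsum_mul_left]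
  congr 1 with m
  rw [rpow_add (by positivity), rpow_mul (by positivity), rpow_natCast, rpow_two, besselCoeff]
  ring

lemma besselI_pos (hν : -1 < ν) {y : ℝ} (hy : 0 < y) : 0 < besselI ν y := by
  rw [besselI_eq_rpow_mul_besselSeries hy]
  exact mul_pos (by positivity) (besselSeries_pos hν (by positivity))

lemma differentiableAt_besselI (hν : -1 < ν) {y : ℝ} (hy : 0 < y) :
    DifferentiableAt ℝ (besselI ν) y := by
  have hrep : (fun z => (z / 2) ^ ν * besselSeries ν ((z / 2) ^ 2)) =ᶠ[𝓝 y] besselI ν := by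
    filter_upwards [lt_mem_nhds hy] with z hz
    exact (besselI_eq_rpow_mul_besselSeries hz).symm
  refine DifferentiableAt.congr_of_eventuallyEq ?_ hrep.symm
  exact ((differentiableAt_id.div_const 2).rpow_const (Or.inl (by positivity))).mul
    ((differentiable_besselSeries hν).differentiableAt.comp y (by fun_prop))

end Bessel

lemma hasDerivAt_sqrt_const_mul {c x : ℝ} (hc : 0 < c) (hx : 0 < x) :
    HasDerivAt (fun z => √(c * z)) (√(c / x) / 2) x := by
  have h := ((hasDerivAt_id' x).const_mul c).sqrt (by positivity)
  refine h.congr_deriv ?_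
  rw [mul_one, div_eq_mul_inv c x, sqrt_mul hc.le, sqrt_mul hc.le, sqrt_inv]
  field_simp
  rw [sq_sqrt hc.le]

lemma hasDerivAt_div_const_rpow {c x : ℝ} (p : ℝ) (hc : c ≠ 0) (hx : x ≠ 0) :
    HasDerivAt (fun z => (z / c) ^ p) (p * (x / c) ^ p / x) x := by
  have h := ((hasDerivAt_id' x).div_const c).rpow_const (p := p) (Or.inl (div_ne_zero hx hc))
  refine h.congr_deriv ?_
  rw [rpow_sub_one (div_ne_zero hx hc)]
  field_simp

lemma hasDerivAt_ncchi {k lam x : ℝ} (hlam : 0 < lam) (hx : 0 < x)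
    (hB : DifferentiableAt ℝ (besselI ((k - 2) / 2)) √(lam * x))
    (hB₀ : besselI ((k - 2) / 2) √(lam * x) ≠ 0) :
    HasDerivAt (ncchi k lam)
      (1 / 2 * ncchi k lam x *
        (-1 + (k - 2) / (2 * x) +
          √(lam / x) * deriv (besselI ((k - 2) / 2)) √(lam * x) /
            besselI ((k - 2) / 2) √(lam * x))) x := by
  have hE : HasDerivAt (fun z => exp (-(z + lam) / 2)) (exp (-(x + lam) / 2) * (-1 / 2)) x :=
    (((hasDerivAt_id' x).add_const lam).neg.div_const 2).exp
  have h := ((hE.const_mul (1 / 2)).mul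
    (hasDerivAt_div_const_rpow ((k - 2) / 4) hlam.ne' hx.ne')).mul
    (hB.hasDerivAt.comp x (hasDerivAt_sqrt_const_mul hlam hx))
  refine h.congr_deriv ?_
  simp only [ncchi, Pi.mul_apply, Function.comp_apply]
  generalize besselI ((k - 2) / 2) √(lam * x) = B at hB₀ ⊢
  field_simp
  ring

theorem stmt_0 (k lam x : ℝ) (hk : 0 < k) (hlam : 0 < lam) (hx : 0 < x) :
    DifferentiableAt ℝ (ncchi k lam) x ∧
    deriv (ncchi k lam) x =
      1 / 2 * ncchi k lam x *
        (-1 + (k - 2) / (2 * x) +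
          Real.sqrt (lam / x) * deriv (besselI ((k - 2) / 2)) (Real.sqrt (lam * x)) /
            besselI ((k - 2) / 2) (Real.sqrt (lam * x))) := by
  have hν : -1 < (k - 2) / 2 := by linarith
  have hy : 0 < √(lam * x) := by positivity
  have h := hasDerivAt_ncchi hlam hx (differentiableAt_besselI hν hy) (besselI_pos hν hy).ne'
  exact ⟨h.differentiableAt, h.deriv⟩
end

section
/- Let k > 0 and let x : (0,∞) → (0,∞) be a differentiable function of λ such that for every λ > 0 the master equation √(λ·x(λ)) · I'_{(k−2)/2}(√(λ·x(λ))) = (x(λ) − (k−2)/2) · I_{(k−2)/2}(√(λ·x(λ))) holds. Then for every λ > 0 with x(λ) + λ·x'(λ) ≠ 0, differentiating with respect to λ yields √(λ·x(λ)) · I''_{(k−2)/2}(√(λ·x(λ))) = (x(λ) − k/2) · I'_{(k−2)/2}(√(λ·x(λ))) + (2·√(λ·x(λ))·x'(λ)/(x(λ) + λ·x'(λ))) · I_{(k−2)/2}(√(λ·x(λ))), where I'_ν and I''_ν denote the first and second derivatives of I_ν. -/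
open Real

/-!
On `(0, ∞)` one has `I_ν(t) = (t/2)^ν · Σ cₘ (t²/4)^m`, where the coefficients satisfy
`c_{m+1} / c_m = 1 / ((m+1)(m+ν+1))`, so the series is entire and `I_ν` is smooth there.
The identity is then the derivative of the master equation along `λ ↦ √(λ x(λ))`, whose
derivative `(x + λ x') / (2 √(λ x))` is nonzero by hypothesis and can be divided out.
-/

open Filter Set FormalMultilinearSeries Topology
open scoped ContDiff

noncomputable def besselICoeff (ν : ℝ) (m : ℕ) : ℝ :=
  1 / ((m.factorial : ℝ) * Gamma ((m : ℝ) + ν + 1))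

noncomputable def besselIEntire (ν : ℝ) : ℝ → ℝ :=
  ofScalarsSum (besselICoeff ν)

section Coeff

variable {ν : ℝ} (hν : -1 < ν)
include hν

lemma besselICoeff_pos (m : ℕ) : 0 < besselICoeff ν m := by
  have : 0 < Gamma ((m : ℝ) + ν + 1) := Gamma_pos_of_pos (by linarith [m.cast_nonneg (α := ℝ)])
  unfold besselICoeff
  positivity

lemma besselICoeff_succ (n : ℕ) :
    besselICoeff ν (n + 1) = besselICoeff ν n / ((n + 1) * (n + ν + 1)) := by
  have hn : (0 : ℝ) < n + ν + 1 := by linarith [n.cast_nonneg (α := ℝ)]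
  have hΓ : Gamma ((n : ℝ) + 1 + ν + 1) = (n + ν + 1) * Gamma (n + ν + 1) := by
    rw [← Gamma_add_one hn.ne']
    ring_nf
  simp only [besselICoeff, Nat.factorial_succ, Nat.cast_mul, Nat.cast_succ, hΓ]
  field_simp

lemma tendsto_besselICoeff_ratio :
    Tendsto (fun n : ℕ ↦ ‖besselICoeff ν (n + 1)‖ / ‖besselICoeff ν n‖) atTop (𝓝 0) := by
  have hratio (n : ℕ) : ‖besselICoeff ν (n + 1)‖ / ‖besselICoeff ν n‖
      = ((n + 1) * (n + ν + 1))⁻¹ := by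
    have hc := besselICoeff_pos hν n
    rw [norm_of_nonneg (besselICoeff_pos hν _).le, norm_of_nonneg hc.le, besselICoeff_succ hν]
    field_simp
  simp only [hratio]
  refine Tendsto.inv_tendsto_atTop (Tendsto.atTop_mul_atTop₀ ?_ ?_)
  · exact tendsto_atTop_add_const_right _ _ tendsto_natCast_atTop_atTop
  · exact tendsto_atTop_add_const_right _ _
      (tendsto_atTop_add_const_right _ _ tendsto_natCast_atTop_atTop)

lemma radius_ofScalars_besselICoeff : (ofScalars ℝ (besselICoeff ν)).radius = ⊤ :=
  ofScalars_radius_eq_top_of_tendsto ℝ _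
    (Eventually.of_forall fun n ↦ (besselICoeff_pos hν n).ne') (tendsto_besselICoeff_ratio hν)

lemma analyticAt_besselIEntire (z : ℝ) : AnalyticAt ℝ (besselIEntire ν) z := by
  have hrad := radius_ofScalars_besselICoeff hν
  exact ((ofScalars ℝ (besselICoeff ν)).hasFPowerSeriesOnBall (by simp [hrad])).analyticAt_of_mem
    (by simp [hrad])

end Coeff

lemma besselI_eq_rpow_mul_besselIEntire (ν : ℝ) {t : ℝ} (ht : 0 < t) :
    besselI ν t = (t / 2) ^ ν * besselIEntire ν (t ^ 2 / 4) := by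
  rw [besselIEntire, ofScalars_sum_eq, besselI, ← tsum_mul_left]
  refine tsum_congr fun m ↦ ?_
  have hpow : (t / 2) ^ (2 * (m : ℝ) + ν) = (t ^ 2 / 4) ^ m * (t / 2) ^ ν := by
    rw [rpow_add (by positivity), show 2 * (m : ℝ) = ((2 * m : ℕ) : ℝ) by push_cast; ring,
      rpow_natCast, pow_mul]
    ring
  rw [hpow, smul_eq_mul, besselICoeff]
  ring

lemma contDiffOn_besselI {ν : ℝ} (hν : -1 < ν) (n : WithTop ℕ∞) :
    ContDiffOn ℝ n (besselI ν) (Ioi 0) := by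
  refine fun t (ht : 0 < t) ↦ ContDiffAt.contDiffWithinAt ?_
  have hpow : ContDiffAt ℝ n (fun t : ℝ ↦ (t / 2) ^ ν) t :=
    (contDiffAt_rpow_const_of_ne (by positivity)).comp t (contDiffAt_id.div_const 2)
  have hentire : ContDiffAt ℝ n (fun t : ℝ ↦ besselIEntire ν (t ^ 2 / 4)) t :=
    (analyticAt_besselIEntire hν _).contDiffAt.comp t ((contDiffAt_id.pow 2).div_const 4)
  refine (hpow.mul hentire).congr_of_eventuallyEq ?_
  filter_upwards [Ioi_mem_nhds ht] with s hs using besselI_eq_rpow_mul_besselIEntire ν hs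

lemma differentiableOn_besselI {ν : ℝ} (hν : -1 < ν) : DifferentiableOn ℝ (besselI ν) (Ioi 0) :=
  (contDiffOn_besselI hν 1).differentiableOn one_ne_zero

lemma differentiableOn_deriv_besselI {ν : ℝ} (hν : -1 < ν) :
    DifferentiableOn ℝ (deriv (besselI ν)) (Ioi 0) :=
  ((contDiffOn_infty_iff_deriv_of_isOpen isOpen_Ioi).1 (contDiffOn_besselI hν ∞)).2.differentiableOn
    (by simp)

lemma hasDerivAt_sqrt_mul_self {x : ℝ → ℝ} {x' lam : ℝ} (hx : HasDerivAt x x' lam)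
    (h0 : lam * x lam ≠ 0) :
    HasDerivAt (fun l ↦ √(l * x l)) ((x lam + lam * x') / (2 * √(lam * x lam))) lam := by
  simpa only [one_mul, Pi.mul_apply] using ((hasDerivAt_id' lam).mul hx).sqrt h0

lemma eq_of_eventually_mul_deriv_comp_eq {F g x : ℝ → ℝ} {g' x' ν lam : ℝ}
    (hg : HasDerivAt g g' lam) (hx : HasDerivAt x x' lam)
    (hF : DifferentiableAt ℝ F (g lam)) (hF' : DifferentiableAt ℝ (deriv F) (g lam))
    (heq : ∀ᶠ l in 𝓝 lam, g l * deriv F (g l) = (x l - ν) * F (g l)) :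
    g' * deriv F (g lam) + g lam * (deriv (deriv F) (g lam) * g') =
      x' * F (g lam) + (x lam - ν) * (deriv F (g lam) * g') := by
  have hlhs := hg.mul (hF'.hasDerivAt.comp lam hg)
  have hrhs := (hx.sub_const ν).mul (hF.hasDerivAt.comp lam hg)
  exact hlhs.unique (hrhs.congr_of_eventuallyEq heq)

lemma sqrt_mul_deriv_deriv_eq {F x : ℝ → ℝ} {ν lam : ℝ}
    (hx : DifferentiableAt ℝ x lam) (hpos : 0 < lam * x lam)
    (hF : DifferentiableAt ℝ F √(lam * x lam))
    (hF' : DifferentiableAt ℝ (deriv F) √(lam * x lam))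
    (heq : ∀ᶠ l in 𝓝 lam, √(l * x l) * deriv F √(l * x l) = (x l - ν) * F √(l * x l))
    (hne : x lam + lam * deriv x lam ≠ 0) :
    √(lam * x lam) * deriv (deriv F) √(lam * x lam) =
      (x lam - (ν + 1)) * deriv F √(lam * x lam) +
        2 * √(lam * x lam) * deriv x lam / (x lam + lam * deriv x lam) * F √(lam * x lam) := by
  have hsqrt : 0 < √(lam * x lam) := sqrt_pos.2 hpos
  have key := eq_of_eventually_mul_deriv_comp_eq
    (hasDerivAt_sqrt_mul_self hx.hasDerivAt hpos.ne') hx.hasDerivAt hF hF' heq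
  generalize √(lam * x lam) = y at *
  generalize x lam + lam * deriv x lam = s at *
  field_simp at key ⊢
  linear_combination key

theorem stmt_2 (k : ℝ) (hk : 0 < k) (x : ℝ → ℝ)
    (hxpos : ∀ lam : ℝ, 0 < lam → 0 < x lam)
    (hxdiff : ∀ lam : ℝ, 0 < lam → DifferentiableAt ℝ x lam)
    (hmaster : ∀ lam : ℝ, 0 < lam →
      Real.sqrt (lam * x lam) * deriv (besselI ((k - 2) / 2)) (Real.sqrt (lam * x lam)) =
        (x lam - (k - 2) / 2) * besselI ((k - 2) / 2) (Real.sqrt (lam * x lam)))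
    (lam : ℝ) (hlam : 0 < lam) (hne : x lam + lam * deriv x lam ≠ 0) :
    Real.sqrt (lam * x lam) *
        deriv (deriv (besselI ((k - 2) / 2))) (Real.sqrt (lam * x lam)) =
      (x lam - k / 2) * deriv (besselI ((k - 2) / 2)) (Real.sqrt (lam * x lam)) +
        2 * Real.sqrt (lam * x lam) * deriv x lam / (x lam + lam * deriv x lam) *
          besselI ((k - 2) / 2) (Real.sqrt (lam * x lam)) := by
  have hpos : 0 < lam * x lam := mul_pos hlam (hxpos lam hlam)
  have hν : -1 < (k - 2) / 2 := by linarith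
  have hsqrt : Ioi 0 ∈ 𝓝 √(lam * x lam) := Ioi_mem_nhds (sqrt_pos.2 hpos)
  have heq : ∀ᶠ l in 𝓝 lam, _ := eventually_gt_nhds hlam |>.mono hmaster
  rw [show k / 2 = (k - 2) / 2 + 1 by ring]
  exact sqrt_mul_deriv_deriv_eq (hxdiff lam hlam) hpos
    ((differentiableOn_besselI hν).differentiableAt hsqrt)
    ((differentiableOn_deriv_besselI hν).differentiableAt hsqrt) heq hne
end

section
/- Let k > 0 and let x : (0,∞) → ℝ be a differentiable function satisfying λ·x'(λ)·(x(λ) − k − λ + 4) + x(λ)·(x(λ) − k − λ + 2) = 0 for all λ > 0. Define y : (0,∞) → ℝ by y(t) = t · x(k/t) (i.e. the substitution t = k/λ, y = t·x). Then y is differentiable and satisfies −(y'(t)·t − y(t))·(y(t) − k·t − k + 4t) + y(t)·(y(t) − k·t − k + 2t) = 0 for all t > 0. -/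
/-!
Under `t = k / λ`, `y = t · x`, the chain rule gives `y'(t) = x(λ) - λ x'(λ)`, hence
`y' t - y = -k x'(λ)`, while `y - k t - k + c t = t (x - k - λ + c)`. The transformed
expression is therefore `t²` times the original one at `λ = k / t`, which vanishes.
-/

theorem HasDerivAt.mul_comp_const_div {x : ℝ → ℝ} {x' k t : ℝ} (ht : t ≠ 0)
    (hx : HasDerivAt x x' (k / t)) :
    HasDerivAt (fun s => s * x (k / s)) (x (k / t) - k / t * x') t := by
  have hdiv : HasDerivAt (fun s => k / s) (-(k / t ^ 2)) t := by
    simpa [div_eq_mul_inv, neg_div] using (hasDerivAt_inv ht).const_mul k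
  refine ((hasDerivAt_id' t).mul (hx.comp t hdiv)).congr_deriv ?_
  simp only [Function.comp_apply]
  field_simp
  ring

theorem stmt_4 (k : ℝ) (hk : 0 < k) (x : ℝ → ℝ)
    (hxdiff : ∀ lam : ℝ, 0 < lam → DifferentiableAt ℝ x lam)
    (hode : ∀ lam : ℝ, 0 < lam →
      lam * deriv x lam * (x lam - k - lam + 4) + x lam * (x lam - k - lam + 2) = 0) :
    ∀ t : ℝ, 0 < t →
      DifferentiableAt ℝ (fun t : ℝ => t * x (k / t)) t ∧
      -(deriv (fun t : ℝ => t * x (k / t)) t * t - t * x (k / t)) *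
          (t * x (k / t) - k * t - k + 4 * t) +
        t * x (k / t) * (t * x (k / t) - k * t - k + 2 * t) = 0 := by
  intro t ht
  have hlam : 0 < k / t := div_pos hk ht
  have hy := (hxdiff _ hlam).hasDerivAt.mul_comp_const_div ht.ne'
  refine ⟨hy.differentiableAt, ?_⟩
  rw [hy.deriv]
  have hode_lam := hode _ hlam
  have hk_eq : k = t * (k / t) := by field_simp
  generalize k / t = lam at hode_lam hk_eq ⊢
  subst hk_eq
  linear_combination t ^ 2 * hode_lam
end

section
/- For k = 2 and any λ > 0, the derivative of the density satisfies lim_{x→0⁺} f'_{2,λ}(x) = (1/4)·exp(−λ/2)·(λ/2 − 1). In particular, the limiting derivative at the origin is positive if and only if λ > 2. -/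
open Real

/-! For `k = 2` the factor `(x/λ)^0` disappears and `I₀(√(λx)) = g(λx/4)` with
`g(t) = ∑ tᵐ/(m!)²` (`besselIZeroReduced`), an entire function. So on `x > 0` the density
coincides with the smooth function `½ e^{-(x+λ)/2} g(λx/4)`, whose derivative is continuous;
the limit is therefore its derivative at `0`, computed from `g(0) = g'(0) = 1`. -/

open Filter Set FormalMultilinearSeries
open scoped Nat Topology

theorem tendsto_deriv_nhdsGT_of_eqOn {f g : ℝ → ℝ} {a : ℝ} (hfg : EqOn f g (Ioi a))
    (hg : ContDiff ℝ 1 g) : Tendsto (deriv f) (𝓝[>] a) (𝓝 (deriv g a)) := by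
  refine (hg.continuous_deriv le_rfl).continuousAt.continuousWithinAt.tendsto.congr' ?_
  filter_upwards [self_mem_nhdsWithin] with x hx
  exact (eventuallyEq_of_mem (isOpen_Ioi.mem_nhds hx) hfg).deriv_eq.symm

noncomputable def besselIZeroCoeff (m : ℕ) : ℝ := ((m ! : ℝ) ^ 2)⁻¹

noncomputable def besselIZeroReduced : ℝ → ℝ := ofScalarsSum besselIZeroCoeff

theorem radius_ofScalars_besselIZeroCoeff : (ofScalars ℝ besselIZeroCoeff).radius = ⊤ := by
  refine ofScalars_radius_eq_top_of_tendsto _ _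
    (.of_forall fun n => by unfold besselIZeroCoeff; positivity) ?_
  have hratio (n : ℕ) : ‖besselIZeroCoeff n.succ‖ / ‖besselIZeroCoeff n‖
      = (1 / ((n : ℝ) + 1)) ^ 2 := by
    rw [besselIZeroCoeff, besselIZeroCoeff, Nat.factorial_succ, norm_inv, norm_inv,
      Real.norm_of_nonneg (by positivity), Real.norm_of_nonneg (by positivity)]
    push_cast
    field_simp
  simp only [hratio]
  simpa using (tendsto_one_div_add_atTop_nhds_zero_nat (𝕜 := ℝ)).pow 2

theorem hasFPowerSeriesOnBall_besselIZeroReduced :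
    HasFPowerSeriesOnBall besselIZeroReduced (ofScalars ℝ besselIZeroCoeff) 0 ⊤ := by
  have h := (ofScalars ℝ besselIZeroCoeff).hasFPowerSeriesOnBall
    (by simp [radius_ofScalars_besselIZeroCoeff])
  rwa [radius_ofScalars_besselIZeroCoeff] at h

theorem contDiff_besselIZeroReduced {n : WithTop ℕ∞} : ContDiff ℝ n besselIZeroReduced :=
  AnalyticOnNhd.contDiff fun _ _ =>
    hasFPowerSeriesOnBall_besselIZeroReduced.analyticAt_of_mem (by simp)

theorem besselIZeroReduced_zero : besselIZeroReduced 0 = 1 := by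
  simp [besselIZeroReduced, besselIZeroCoeff]

theorem hasDerivAt_besselIZeroReduced_zero : HasDerivAt besselIZeroReduced 1 0 := by
  simpa [besselIZeroCoeff] using
    hasFPowerSeriesOnBall_besselIZeroReduced.hasFPowerSeriesAt.hasDerivAt

theorem besselI_zero_eq (y : ℝ) : besselI 0 y = besselIZeroReduced (y ^ 2 / 4) := by
  rw [besselI, besselIZeroReduced, ofScalarsSum_eq_tsum]
  refine tsum_congr fun m => ?_
  have hpow : (y / 2) ^ (2 * (m : ℝ) + 0) = (y ^ 2 / 4) ^ m := by
    rw [add_zero, ← Nat.cast_ofNat, ← Nat.cast_mul, Real.rpow_natCast, pow_mul]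
    ring
  rw [hpow, add_zero, Real.Gamma_nat_eq_factorial, besselIZeroCoeff, smul_eq_mul]
  field_simp

noncomputable def ncchiTwoExt (lam x : ℝ) : ℝ :=
  1 / 2 * exp (-(x + lam) / 2) * besselIZeroReduced (lam * x / 4)

theorem ncchi_two_eq_ncchiTwoExt {lam x : ℝ} (h : 0 ≤ lam * x) :
    ncchi 2 lam x = ncchiTwoExt lam x := by
  rw [ncchi, ncchiTwoExt, sub_self, zero_div, zero_div, rpow_zero, mul_one, besselI_zero_eq,
    sq_sqrt h]

theorem contDiff_ncchiTwoExt {n : WithTop ℕ∞} (lam : ℝ) :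
    ContDiff ℝ n (ncchiTwoExt lam) := by
  have := contDiff_besselIZeroReduced (n := n)
  unfold ncchiTwoExt
  fun_prop

theorem hasDerivAt_ncchiTwoExt_zero (lam : ℝ) :
    HasDerivAt (ncchiTwoExt lam) (1 / 4 * exp (-lam / 2) * (lam / 2 - 1)) 0 := by
  have hexp : HasDerivAt (fun x => 1 / 2 * exp (-(x + lam) / 2))
      (1 / 2 * (exp (-(0 + lam) / 2) * (-1 / 2))) 0 :=
    ((((hasDerivAt_id 0).add_const lam).neg.div_const 2).exp).const_mul _
  have hbessel : HasDerivAt (fun x => besselIZeroReduced (lam * x / 4)) (1 * (lam / 4)) 0 := by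
    have hlin : HasDerivAt (fun x : ℝ => lam * x / 4) (lam / 4) 0 := by
      simpa using ((hasDerivAt_id (0 : ℝ)).const_mul lam).div_const 4
    exact hasDerivAt_besselIZeroReduced_zero.comp_of_eq 0 hlin (by simp)
  refine (hexp.mul hbessel).congr_deriv ?_
  rw [mul_zero, zero_div, besselIZeroReduced_zero, zero_add]
  ring

theorem stmt_10 (lam : ℝ) (hlam : 0 < lam) :
    Filter.Tendsto (fun x : ℝ => deriv (ncchi 2 lam) x) (nhdsWithin 0 (Set.Ioi 0))
      (nhds (1 / 4 * Real.exp (-lam / 2) * (lam / 2 - 1))) ∧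
    (0 < 1 / 4 * Real.exp (-lam / 2) * (lam / 2 - 1) ↔ 2 < lam) := by
  refine ⟨?_, ?_⟩
  · rw [← (hasDerivAt_ncchiTwoExt_zero lam).deriv]
    exact tendsto_deriv_nhdsGT_of_eqOn
      (fun x hx => ncchi_two_eq_ncchiTwoExt (mul_pos hlam hx).le) (contDiff_ncchiTwoExt lam)
  · rw [mul_pos_iff_of_pos_left (by positivity)]
    constructor <;> intro h <;> linarith
end

section
/- For k = 2 and λ > 2, the maximum of the density is not attained at the origin: there exists x > 0 such that f_{2,λ}(x) > (1/2)·exp(−λ/2), where (1/2)·exp(−λ/2) is the limiting value of f_{2,λ} at 0. -/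
open Real

/-! For `k = 2` we have `f(x) = ½ e^{-λ/2} · e^{-x/2} I₀(√(λx))`, and the first two terms of
the series give `I₀(√(λx)) ≥ 1 + λx/4`. Since `e^{-x/2} > 1 - x/2`, it suffices that
`(1 - x/2)(1 + λx/4) ≥ 1`, which holds at `x = (λ - 2)/λ` because
`(1 - x/2)(1 + λx/4) - 1 = x (λ - 2)/8` there. -/

lemma besselI_zero_eq_tsum (y : ℝ) :
    besselI 0 y = ∑' m : ℕ, (y ^ 2 / 4) ^ m / (m.factorial : ℝ) ^ 2 := by
  unfold besselI
  congr 1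
  ext m
  rw [show 2 * (m : ℝ) + 0 = ((2 * m : ℕ) : ℝ) by push_cast; ring, Real.rpow_natCast,
    add_zero, Real.Gamma_nat_eq_factorial, pow_mul, div_pow]
  norm_num
  ring

lemma summable_besselI_zero_terms (t : ℝ) (ht : 0 ≤ t) :
    Summable (fun m : ℕ => t ^ m / (m.factorial : ℝ) ^ 2) := by
  refine (Real.summable_pow_div_factorial t).of_nonneg_of_le (fun m => by positivity)
    fun m => div_le_div_of_nonneg_left (by positivity) (by positivity) ?_
  have h1 : (1 : ℝ) ≤ m.factorial := mod_cast m.factorial_pos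
  nlinarith

lemma one_add_sq_div_four_le_besselI_zero (y : ℝ) : 1 + y ^ 2 / 4 ≤ besselI 0 y := by
  rw [besselI_zero_eq_tsum]
  calc 1 + y ^ 2 / 4 = ∑ m ∈ Finset.range 2, (y ^ 2 / 4) ^ m / (m.factorial : ℝ) ^ 2 := by
        simp [Finset.sum_range_succ]
    _ ≤ _ := (summable_besselI_zero_terms _ (by positivity)).sum_le_tsum _
        fun m _ => by positivity

lemma ncchi_two (lam x : ℝ) :
    ncchi 2 lam x = 1 / 2 * Real.exp (-lam / 2) * (Real.exp (-x / 2) *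
      besselI 0 (Real.sqrt (lam * x))) := by
  rw [ncchi, show -(x + lam) / 2 = -lam / 2 + -x / 2 by ring, Real.exp_add]
  norm_num
  ring

lemma exp_neg_half_mul_one_add_le_ncchi_two {lam x : ℝ} (hlam : 0 ≤ lam) (hx : 0 ≤ x) :
    1 / 2 * Real.exp (-lam / 2) * (Real.exp (-x / 2) * (1 + lam * x / 4)) ≤ ncchi 2 lam x := by
  have hI := one_add_sq_div_four_le_besselI_zero (Real.sqrt (lam * x))
  rw [Real.sq_sqrt (by positivity)] at hI
  rw [ncchi_two]
  gcongr

lemma one_lt_exp_neg_half_mul_one_add {lam : ℝ} (hlam : 2 < lam) :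
    1 < Real.exp (-((lam - 2) / lam) / 2) * (1 + lam * ((lam - 2) / lam) / 4) := by
  set x := (lam - 2) / lam
  have hx : 0 < x := div_pos (by linarith) (by linarith)
  have hlx : lam * x = lam - 2 := mul_div_cancel₀ _ (by positivity)
  have hexp : 1 - x / 2 < Real.exp (-x / 2) := by
    linarith [Real.add_one_lt_exp (show -x / 2 ≠ 0 by linarith)]
  calc 1 ≤ (1 - x / 2) * (1 + lam * x / 4) := by nlinarith
    _ < _ := mul_lt_mul_of_pos_right hexp (by linarith)

theorem stmt_11 (lam : ℝ) (hlam : 2 < lam) :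
    ∃ x : ℝ, 0 < x ∧ 1 / 2 * Real.exp (-lam / 2) < ncchi 2 lam x := by
  have hx : 0 < (lam - 2) / lam := div_pos (by linarith) (by linarith)
  refine ⟨(lam - 2) / lam, hx, ?_⟩
  calc 1 / 2 * Real.exp (-lam / 2)
      < 1 / 2 * Real.exp (-lam / 2) *
          (Real.exp (-((lam - 2) / lam) / 2) * (1 + lam * ((lam - 2) / lam) / 4)) :=
        lt_mul_of_one_lt_right (by positivity) (one_lt_exp_neg_half_mul_one_add hlam)
    _ ≤ ncchi 2 lam ((lam - 2) / lam) :=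
        exp_neg_half_mul_one_add_le_ncchi_two (by linarith) hx.le
end
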